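/- arXiv:1104.0373 — 3 statements merged into one kernel-verified Lean document; each statement's English description precedes it below -/
import Mathlib

section
/- If X is a symmetric log-concave random variable on the reals with variance 1, then its fourth moment satisfies E[X^4] ≤ 6. -/
/-!
Compare the density `g` on `(0, ∞)` with the unit-variance Laplace density `L`, which has there
the same mass `1/2` and second moment `1/2`, and fourth moment `3`. As `log g` is concave and
`log L` affine, `g - L` is nonnegative exactly on an interval with endpoints `r ≤ s`, so
`(x² - r²)(x² - s²)(g - L) ≤ 0` on `(0, ∞)`. Integrating, the equal lower moments leave
`∫₀^∞ x⁴ g ≤ 3`, and symmetry doubles this.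
-/

open MeasureTheory ProbabilityTheory Set Real
open scoped Nat

lemma integrableOn_Ioi_pow_mul_exp_neg_mul (k : ℕ) {b : ℝ} (hb : 0 < b) :
    IntegrableOn (fun x : ℝ => x ^ k * exp (-(b * x))) (Ioi 0) := by
  simpa [rpow_natCast] using
    integrableOn_rpow_mul_exp_neg_mul_rpow (p := 1) (s := k) (by linarith [k.cast_nonneg (α := ℝ)])
      one_pos hb

lemma integral_Ioi_pow_mul_exp_neg_mul (k : ℕ) {b : ℝ} (hb : 0 < b) :
    ∫ x in Ioi 0, x ^ k * exp (-(b * x)) = k ! / b ^ (k + 1) := by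
  have h := integral_rpow_mul_exp_neg_mul_Ioi (a := k + 1) (by positivity) hb
  rw [add_sub_cancel_right, Gamma_nat_eq_factorial, ← Nat.cast_succ, rpow_natCast] at h
  simpa [rpow_natCast, div_eq_mul_inv, mul_comm] using h

/-- On `x > 0`, the density `√2/2 · e^{-√2|x|}` of the Laplace law with variance `1`. -/
noncomputable def laplaceDensity (x : ℝ) : ℝ := √2 / 2 * exp (-(√2 * x))

lemma laplaceDensity_nonneg (x : ℝ) : 0 ≤ laplaceDensity x := by
  unfold laplaceDensity; positivity

lemma laplaceDensity_convexComb (a c t : ℝ) :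
    laplaceDensity (t * a + (1 - t) * c) = laplaceDensity a ^ t * laplaceDensity c ^ (1 - t) := by
  have hc : (0 : ℝ) ≤ √2 / 2 := by positivity
  simp only [laplaceDensity]
  rw [mul_rpow hc (exp_pos _).le, mul_rpow hc (exp_pos _).le, ← exp_mul, ← exp_mul,
    mul_mul_mul_comm, ← rpow_add' hc (by simp), add_sub_cancel, rpow_one, ← exp_add]
  ring_nf

lemma integrableOn_Ioi_pow_mul_laplaceDensity (k : ℕ) :
    IntegrableOn (fun x => x ^ k * laplaceDensity x) (Ioi 0) := by
  have := (integrableOn_Ioi_pow_mul_exp_neg_mul k (b := √2) (by positivity)).const_mul (√2 / 2)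
  unfold IntegrableOn
  simpa only [laplaceDensity, mul_left_comm] using this

lemma integral_Ioi_pow_mul_laplaceDensity (k : ℕ) :
    ∫ x in Ioi 0, x ^ k * laplaceDensity x = k ! / (2 * √2 ^ k) := by
  simp only [laplaceDensity, mul_left_comm _ (√2 / 2)]
  rw [integral_const_mul, integral_Ioi_pow_mul_exp_neg_mul k (by positivity)]
  have : √2 ≠ 0 := by positivity
  field_simp
  ring

lemma integral_Ioi_laplaceDensity : ∫ x in Ioi 0, laplaceDensity x = 1 / 2 := by
  simpa using integral_Ioi_pow_mul_laplaceDensity 0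

lemma integral_Ioi_sq_mul_laplaceDensity : ∫ x in Ioi 0, x ^ 2 * laplaceDensity x = 1 / 2 := by
  rw [integral_Ioi_pow_mul_laplaceDensity]
  norm_num

lemma integral_Ioi_pow_four_mul_laplaceDensity :
    ∫ x in Ioi 0, x ^ 4 * laplaceDensity x = 3 := by
  rw [integral_Ioi_pow_mul_laplaceDensity, show √2 ^ 4 = (√2 ^ 2) ^ 2 by ring]
  norm_num [Nat.factorial]

def IsLogConcave (g : ℝ → ℝ) : Prop :=
  ∀ x y t : ℝ, 0 ≤ t → t ≤ 1 → g x ^ t * g y ^ (1 - t) ≤ g (t * x + (1 - t) * y)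

namespace IsLogConcave

variable {g : ℝ → ℝ}

lemma convex_setOf_le (hg : IsLogConcave g) {e : ℝ → ℝ} (he0 : ∀ x, 0 ≤ e x)
    (he : ∀ x y t : ℝ, 0 ≤ t → t ≤ 1 → e (t * x + (1 - t) * y) ≤ e x ^ t * e y ^ (1 - t)) :
    Convex ℝ {x | e x ≤ g x} := by
  intro x hx y hy a b ha hb hab
  obtain rfl : b = 1 - a := by linarith
  calc e (a * x + (1 - a) * y) ≤ e x ^ a * e y ^ (1 - a) := he x y a ha (by linarith)
    _ ≤ g x ^ a * g y ^ (1 - a) :=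
      mul_le_mul (rpow_le_rpow (he0 x) hx ha) (rpow_le_rpow (he0 y) hy (by linarith))
        (rpow_nonneg (he0 y) _) (rpow_nonneg ((he0 x).trans hx) a)
    _ ≤ g (a * x + (1 - a) * y) := hg x y a ha (by linarith)

lemma convex_setOf_pos (hg : IsLogConcave g) : Convex ℝ {x | 0 < g x} := by
  intro x hx y hy a b ha hb hab
  obtain rfl : b = 1 - a := by linarith
  exact (mul_pos (rpow_pos_of_pos hx a) (rpow_pos_of_pos hy _)).trans_le (hg x y a ha (by linarith))

lemma concaveOn_log (hg : IsLogConcave g) : ConcaveOn ℝ {x | 0 < g x} (fun x => log (g x)) := by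
  refine ⟨hg.convex_setOf_pos, fun x hx y hy a b ha hb hab => ?_⟩
  obtain rfl : b = 1 - a := by linarith
  have hgx : 0 < g x := hx
  have hgy : 0 < g y := hy
  calc a • log (g x) + (1 - a) • log (g y) = log (g x ^ a * g y ^ (1 - a)) := by
        rw [log_mul (by positivity) (by positivity), log_rpow hgx, log_rpow hgy, smul_eq_mul,
          smul_eq_mul]
    _ ≤ log (g (a • x + (1 - a) • y)) := log_le_log (by positivity) (hg x y a ha (by linarith))

lemma continuousOn_interior (hg : IsLogConcave g) : ContinuousOn g (interior {x | 0 < g x}) :=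
  (continuous_exp.comp_continuousOn hg.concaveOn_log.continuousOn_interior).congr
    fun _ hx => (exp_log (interior_subset (s := {x | 0 < g x}) hx)).symm

/-- `g` is continuous on the interior of its support, which is an interval, and vanishes off it;
the boundary of an interval is null. -/
lemma aemeasurable (hg : IsLogConcave g) (hg0 : ∀ x, 0 ≤ g x) : AEMeasurable g := by
  set S := {x | 0 < g x}
  have hS : MeasurableSet (interior S) := isOpen_interior.measurableSet
  have hind : AEMeasurable ((interior S).indicator g) :=
    (aemeasurable_indicator_iff hS).2 (hg.continuousOn_interior.aemeasurable hS)
  refine hind.congr ?_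
  have hfr : ∀ᵐ x, x ∉ frontier S :=
    measure_eq_zero_iff_ae_notMem.1 (hg.convex_setOf_pos.addHaar_frontier volume)
  filter_upwards [hfr] with x hx
  by_cases hxi : x ∈ interior S
  · exact indicator_of_mem hxi g
  · have hxS : x ∉ S := fun hxS => hx ⟨subset_closure hxS, hxi⟩
    rw [indicator_of_notMem hxi]
    exact (le_antisymm (not_lt.1 hxS) (hg0 x)).symm

end IsLogConcave

section SignChange

variable {μ : Measure ℝ} {h : ℝ → ℝ}

lemma integral_pow_four_mul_eq (r s : ℝ) (h0 : Integrable h μ)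
    (h2 : Integrable (fun x => x ^ 2 * h x) μ) (h4 : Integrable (fun x => x ^ 4 * h x) μ) :
    ∫ x, x ^ 4 * h x ∂μ = ∫ x, (x ^ 2 - r ^ 2) * (x ^ 2 - s ^ 2) * h x ∂μ
      + (r ^ 2 + s ^ 2) * ∫ x, x ^ 2 * h x ∂μ - r ^ 2 * s ^ 2 * ∫ x, h x ∂μ := by
  have hexp : ∀ x, (x ^ 2 - r ^ 2) * (x ^ 2 - s ^ 2) * h x
      = x ^ 4 * h x - (r ^ 2 + s ^ 2) * (x ^ 2 * h x) + r ^ 2 * s ^ 2 * h x := fun x => by ring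
  have h42 : Integrable (fun x => x ^ 4 * h x - (r ^ 2 + s ^ 2) * (x ^ 2 * h x)) μ :=
    h4.sub (h2.const_mul _)
  simp_rw [hexp]
  rw [integral_add h42 (h0.const_mul _), integral_sub h4 (h2.const_mul _),
    integral_const_mul, integral_const_mul]
  ring

lemma integral_pow_four_mul_nonpos {r s : ℝ} (h0 : Integrable h μ)
    (h2 : Integrable (fun x => x ^ 2 * h x) μ) (h4 : Integrable (fun x => x ^ 4 * h x) μ)
    (m0 : ∫ x, h x ∂μ = 0) (m2 : ∫ x, x ^ 2 * h x ∂μ = 0)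
    (hsign : ∀ᵐ x ∂μ, (x ^ 2 - r ^ 2) * (x ^ 2 - s ^ 2) * h x ≤ 0) :
    ∫ x, x ^ 4 * h x ∂μ ≤ 0 := by
  rw [integral_pow_four_mul_eq r s h0 h2 h4, m0, m2]
  simpa using integral_nonpos_of_ae hsign

lemma quartic_mul_nonpos_of_bddAbove (hA : {x | 0 < x ∧ 0 ≤ h x}.OrdConnected)
    (habove : BddAbove {x | 0 < x ∧ 0 ≤ h x}) {x : ℝ} (hx : 0 < x) :
    (x ^ 2 - sInf {x | 0 < x ∧ 0 ≤ h x} ^ 2) * (x ^ 2 - sSup {x | 0 < x ∧ 0 ≤ h x} ^ 2) * h x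
      ≤ 0 := by
  set A := {x | 0 < x ∧ 0 ≤ h x}
  set r := sInf A
  set s := sSup A
  have hbdd : BddBelow A := ⟨0, fun x hx => hx.1.le⟩
  have hr : 0 ≤ r := Real.sInf_nonneg fun x hx => hx.1.le
  have hrs : r ≤ s := Real.sInf_le_sSup A hbdd habove
  have hout : x ∉ A → h x < 0 := fun hxA => not_le.1 fun h' => hxA ⟨hx, h'⟩
  rcases lt_or_ge x r with hxr | hrx
  · have h1 : x ^ 2 - r ^ 2 < 0 := by nlinarith
    have h2 : x ^ 2 - s ^ 2 < 0 := by nlinarith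
    exact mul_nonpos_of_nonneg_of_nonpos (mul_pos_of_neg_of_neg h1 h2).le
      (hout (notMem_of_lt_csInf hxr hbdd)).le
  rcases le_or_gt x s with hxs | hsx
  · have h1 : 0 ≤ x ^ 2 - r ^ 2 := by nlinarith
    have h2 : x ^ 2 - s ^ 2 ≤ 0 := by nlinarith
    by_cases hxA : x ∈ Ioo r s
    · have hne : A.Nonempty := by
        by_contra hA0
        simp [r, s, not_nonempty_iff_eq_empty.1 hA0] at hxA
      have hconn : IsConnected A := ⟨hne, isPreconnected_iff_ordConnected.2 hA⟩
      exact mul_nonpos_of_nonpos_of_nonneg (mul_nonpos_of_nonneg_of_nonpos h1 h2)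
        (hconn.Ioo_csInf_csSup_subset hbdd habove hxA).2
    · obtain rfl | rfl : x = r ∨ x = s := by
        by_contra! hne
        exact hxA ⟨lt_of_le_of_ne hrx hne.1.symm, lt_of_le_of_ne hxs hne.2⟩
      all_goals simp
  · have h1 : 0 ≤ x ^ 2 - r ^ 2 := by nlinarith
    have h2 : 0 ≤ x ^ 2 - s ^ 2 := by nlinarith
    exact mul_nonpos_of_nonneg_of_nonpos (mul_nonneg h1 h2) (hout (notMem_of_csSup_lt hsx habove)).le

lemma sq_sub_mul_nonneg_of_not_bddAbove (hA : {x | 0 < x ∧ 0 ≤ h x}.OrdConnected)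
    (habove : ¬BddAbove {x | 0 < x ∧ 0 ≤ h x}) {x : ℝ} (hx : 0 < x) :
    0 ≤ (x ^ 2 - sInf {x | 0 < x ∧ 0 ≤ h x} ^ 2) * h x := by
  set A := {x | 0 < x ∧ 0 ≤ h x}
  set r := sInf A
  have hbdd : BddBelow A := ⟨0, fun x hx => hx.1.le⟩
  have hr : 0 ≤ r := Real.sInf_nonneg fun x hx => hx.1.le
  rcases lt_or_ge x r with hxr | hrx
  · have h1 : x ^ 2 - r ^ 2 < 0 := by nlinarith
    have hxA : x ∉ A := notMem_of_lt_csInf hxr hbdd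
    exact (mul_pos_of_neg_of_neg h1 (not_le.1 fun h' => hxA ⟨hx, h'⟩)).le
  rcases hrx.eq_or_lt with rfl | hrx
  · simp
  · have hIoi : Ioi r ⊆ A :=
      (isPreconnected_iff_ordConnected.2 hA).Ioi_csInf_subset hbdd habove
    exact mul_nonneg (by nlinarith) (hIoi hrx).2

/-- If the interval where `h ≥ 0` is unbounded above, the two vanishing moments force `h = 0`
a.e. -/
lemma exists_ae_sign_pattern (hpos : ∀ᵐ x ∂μ, 0 < x)
    (hA : {x | 0 < x ∧ 0 ≤ h x}.OrdConnected) (h0 : Integrable h μ)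
    (h2 : Integrable (fun x => x ^ 2 * h x) μ) (m0 : ∫ x, h x ∂μ = 0)
    (m2 : ∫ x, x ^ 2 * h x ∂μ = 0) :
    ∃ r s : ℝ, ∀ᵐ x ∂μ, (x ^ 2 - r ^ 2) * (x ^ 2 - s ^ 2) * h x ≤ 0 := by
  by_cases habove : BddAbove {x | 0 < x ∧ 0 ≤ h x}
  · exact ⟨_, _, hpos.mono fun x hx => quartic_mul_nonpos_of_bddAbove hA habove hx⟩
  set r := sInf {x | 0 < x ∧ 0 ≤ h x}
  have hnn : ∀ᵐ x ∂μ, 0 ≤ (x ^ 2 - r ^ 2) * h x :=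
    hpos.mono fun x hx => sq_sub_mul_nonneg_of_not_bddAbove hA habove hx
  have hint : Integrable (fun x => (x ^ 2 - r ^ 2) * h x) μ := by
    simp only [sub_mul]
    exact h2.sub (h0.const_mul (r ^ 2))
  have hzero : ∫ x, (x ^ 2 - r ^ 2) * h x ∂μ = 0 := by
    simp only [sub_mul]
    rw [integral_sub h2 (h0.const_mul _), integral_const_mul, m0, m2]
    ring
  refine ⟨r, 0, ((integral_eq_zero_iff_of_nonneg_ae hnn hint).1 hzero).mono fun x hx => ?_⟩
  simp only [Pi.zero_apply] at hx
  rw [mul_right_comm, hx, zero_mul]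

end SignChange

lemma integral_eq_two_mul_setIntegral_Ioi {μ : Measure ℝ} (hneg : μ.map Neg.neg = μ)
    (hμ0 : μ {0} = 0) {f : ℝ → ℝ} (hf : ∀ x, f (-x) = f x) (hint : Integrable f μ) :
    ∫ x, f x ∂μ = 2 * ∫ x in Ioi 0, f x ∂μ := by
  have hIio : ∫ x in Iio 0, f x ∂μ = ∫ x in Ioi 0, f x ∂μ := by
    conv_lhs => rw [← hneg]
    rw [show Neg.neg = ⇑(MeasurableEquiv.neg ℝ) from rfl, setIntegral_map_equiv]
    simp [hf]
  rw [← integral_add_compl measurableSet_Iio hint, compl_Iio, hIio,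
    setIntegral_congr_set (Ioi_ae_eq_Ici' hμ0).symm]
  ring

section WithDensity

variable {α : Type*} [MeasurableSpace α] {ν : Measure α} {g : α → ℝ}

lemma integrableOn_withDensity_ofReal_iff (hg0 : ∀ x, 0 ≤ g x) (hgm : AEMeasurable g ν)
    {f : α → ℝ} {s : Set α} (hs : MeasurableSet s) :
    IntegrableOn f s (ν.withDensity fun x => ENNReal.ofReal (g x))
      ↔ IntegrableOn (fun x => f x * g x) s ν := by
  rw [IntegrableOn, restrict_withDensity hs,
    integrable_withDensity_iff_integrable_smul₀' hgm.ennreal_ofReal.restrict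
      (ae_of_all _ fun _ => ENNReal.ofReal_lt_top)]
  simp [ENNReal.toReal_ofReal (hg0 _), mul_comm, IntegrableOn]

lemma setIntegral_withDensity_ofReal (hg0 : ∀ x, 0 ≤ g x) (hgm : AEMeasurable g ν)
    (f : α → ℝ) {s : Set α} (hs : MeasurableSet s) :
    ∫ x in s, f x ∂(ν.withDensity fun x => ENNReal.ofReal (g x)) = ∫ x in s, f x * g x ∂ν := by
  rw [setIntegral_withDensity_eq_setIntegral_toReal_smul₀ hgm.ennreal_ofReal.restrict
    (ae_of_all _ fun _ => ENNReal.ofReal_lt_top) f hs]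
  simp [ENNReal.toReal_ofReal (hg0 _), mul_comm]

end WithDensity

lemma integrableOn_Ioi_pow_mul_and_setIntegral_eq_half {Ω : Type*} [MeasureSpace Ω] {X : Ω → ℝ}
    (hX : Measurable X) (hsym : Measure.map X ℙ = Measure.map (fun ω => -X ω) ℙ)
    {g : ℝ → ℝ} (hg0 : ∀ x, 0 ≤ g x) (hgm : AEMeasurable g)
    (hdens : Measure.map X ℙ = volume.withDensity (fun x => ENNReal.ofReal (g x)))
    (k : ℕ) (hk : Even k) (hint : Integrable (fun ω => X ω ^ k) ℙ) :
    IntegrableOn (fun x => x ^ k * g x) (Ioi 0) ∧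
      ∫ x in Ioi 0, x ^ k * g x = (∫ ω, X ω ^ k ∂ℙ) / 2 := by
  set μ := Measure.map X ℙ
  have hneg : μ.map Neg.neg = μ := by
    rw [Measure.map_map measurable_neg hX]
    exact hsym.symm
  have hμ0 : μ {0} = 0 := hdens ▸ withDensity_absolutelyContinuous _ _ (measure_singleton 0)
  have hpow : AEStronglyMeasurable (fun x : ℝ => x ^ k) μ := (continuous_pow k).aestronglyMeasurable
  have hintμ : Integrable (fun x : ℝ => x ^ k) μ :=
    (integrable_map_measure hpow hX.aemeasurable).2 hint
  have htwo := integral_eq_two_mul_setIntegral_Ioi (f := fun x => x ^ k) hneg hμ0 hk.neg_pow hintμ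
  rw [integral_map hX.aemeasurable hpow] at htwo
  rw [hdens] at hintμ htwo
  refine ⟨(integrableOn_withDensity_ofReal_iff hg0 hgm measurableSet_Ioi).1 hintμ.integrableOn, ?_⟩
  rw [htwo, setIntegral_withDensity_ofReal hg0 hgm _ measurableSet_Ioi]
  ring

theorem IsLogConcave.integral_Ioi_pow_four_mul_le {g : ℝ → ℝ} (hg : IsLogConcave g)
    (hint0 : IntegrableOn g (Ioi 0)) (hint2 : IntegrableOn (fun x => x ^ 2 * g x) (Ioi 0))
    (hint4 : IntegrableOn (fun x => x ^ 4 * g x) (Ioi 0))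
    (m0 : ∫ x in Ioi 0, g x = 1 / 2) (m2 : ∫ x in Ioi 0, x ^ 2 * g x = 1 / 2) :
    ∫ x in Ioi 0, x ^ 4 * g x ≤ 3 := by
  set h := fun x => g x - laplaceDensity x
  have hA : {x | 0 < x ∧ 0 ≤ h x}.OrdConnected := by
    have hle := hg.convex_setOf_le laplaceDensity_nonneg
      fun x y t _ _ => (laplaceDensity_convexComb x y t).le
    have hset : {x | 0 < x ∧ 0 ≤ h x} = Ioi 0 ∩ {x | laplaceDensity x ≤ g x} := by
      ext x
      simp [h]
    exact hset ▸ convex_iff_ordConnected.1 ((convex_Ioi 0).inter hle)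
  have hmoment : ∀ k : ℕ, IntegrableOn (fun x => x ^ k * g x) (Ioi 0) →
      IntegrableOn (fun x => x ^ k * h x) (Ioi 0) ∧
        ∫ x in Ioi 0, x ^ k * h x
          = (∫ x in Ioi 0, x ^ k * g x) - ∫ x in Ioi 0, x ^ k * laplaceDensity x := by
    intro k hk
    have hL := integrableOn_Ioi_pow_mul_laplaceDensity k
    simp only [h, mul_sub]
    exact ⟨hk.sub hL, integral_sub hk hL⟩
  obtain ⟨i0, e0⟩ := hmoment 0 (by simpa using hint0)
  obtain ⟨i2, e2⟩ := hmoment 2 hint2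
  obtain ⟨i4, e4⟩ := hmoment 4 hint4
  simp only [pow_zero, one_mul] at i0 e0
  have z0 : ∫ x in Ioi 0, h x = 0 := by rw [e0, m0, integral_Ioi_laplaceDensity, sub_self]
  have z2 : ∫ x in Ioi 0, x ^ 2 * h x = 0 := by
    rw [e2, m2, integral_Ioi_sq_mul_laplaceDensity, sub_self]
  obtain ⟨r, s, hsign⟩ :=
    exists_ae_sign_pattern (ae_restrict_mem measurableSet_Ioi) hA i0 i2 z0 z2
  have h4 := integral_pow_four_mul_nonpos i0 i2 i4 z0 z2 hsign
  rw [e4, integral_Ioi_pow_four_mul_laplaceDensity] at h4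
  linarith

/-- If `X` is a symmetric log-concave random variable on the reals with variance 1,
then its fourth moment satisfies `E[X^4] ≤ 6`. -/
theorem stmt0 {Ω : Type*} [MeasureSpace Ω] [IsProbabilityMeasure (ℙ : Measure Ω)]
    (X : Ω → ℝ) (hX : Measurable X)
    (hsym : Measure.map X ℙ = Measure.map (fun ω => -X ω) ℙ)
    (g : ℝ → ℝ) (hg0 : ∀ x, 0 ≤ g x)
    (hdens : Measure.map X ℙ = volume.withDensity (fun x => ENNReal.ofReal (g x)))
    (hlc : ∀ x y : ℝ, ∀ t : ℝ, 0 ≤ t → t ≤ 1 →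
      g x ^ t * g y ^ (1 - t) ≤ g (t * x + (1 - t) * y))
    (hvar : ∫ ω, (X ω) ^ 2 ∂ℙ = 1) :
    ∫ ω, (X ω) ^ 4 ∂ℙ ≤ 6 := by
  by_cases hi4 : Integrable (fun ω => X ω ^ 4) ℙ
  swap
  · rw [integral_undef hi4]; norm_num
  have hi2 : Integrable (fun ω => X ω ^ 2) ℙ := by
    by_contra hi2
    rw [integral_undef hi2] at hvar
    norm_num at hvar
  have hg : IsLogConcave g := hlc
  have half := integrableOn_Ioi_pow_mul_and_setIntegral_eq_half hX hsym hg0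
    (hg.aemeasurable hg0) hdens
  obtain ⟨i0, m0⟩ := half 0 Even.zero (by simp)
  obtain ⟨i2, m2⟩ := half 2 even_two hi2
  obtain ⟨i4, m4⟩ := half 4 (by decide) hi4
  simp only [pow_zero, one_mul, integral_const, probReal_univ, smul_eq_mul] at i0 m0
  have := hg.integral_Ioi_pow_four_mul_le i0 i2 i4 (by rw [m0]) (by rw [m2, hvar])
  linarith
end

section
/- Let K be a symmetric convex body in ℝ^n and let z ∈ K. Then the Lebesgue measure of the set {x ∈ K : |⟨a,x⟩| ≥ (1/2)⟨a,z⟩} is at least 2^{-n}·vol(K), for any a ∈ ℝ^n. -/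
/-!
Split `K` into `K⁺ = K ∩ {f ≥ 0}` and `K⁻ = K ∩ {f ≤ 0}`. By convexity the half-size copies
`(K⁺ + z)/2` and `(K⁻ - z)/2` lie in `K`, the first where `f ≥ f z / 2` and the second where
`f ≤ -f z / 2`, so for `f z > 0` they are disjoint pieces of the target set, of total volume
`2⁻ⁿ (vol K⁺ + vol K⁻) ≥ 2⁻ⁿ vol K`.
-/

open MeasureTheory AffineMap Module
open scoped ENNReal

section HalfHomothety

variable {E : Type*} [NormedAddCommGroup E] [NormedSpace ℝ E]

lemma Convex.homothety_half_mem {K : Set E} (hK : Convex ℝ K) {z x : E} (hz : z ∈ K)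
    (hx : x ∈ K) : homothety z (2⁻¹ : ℝ) x ∈ K := by
  rw [homothety_eq_lineMap]
  exact hK.lineMap_mem hz hx ⟨by norm_num, by norm_num⟩

lemma ContinuousLinearMap.map_homothety_half (f : E →L[ℝ] ℝ) (z x : E) :
    f (homothety z (2⁻¹ : ℝ) x) = (f x + f z) / 2 := by
  simp only [homothety_apply, vsub_eq_sub, vadd_eq_add, map_add, map_smul, map_sub, smul_eq_mul]
  ring

variable [MeasurableSpace E] [BorelSpace E] [FiniteDimensional ℝ E]
  (μ : Measure E) [μ.IsAddHaarMeasure]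

lemma addHaar_image_homothety_half (z : E) (s : Set E) :
    μ (homothety z (2⁻¹ : ℝ) '' s) = 2⁻¹ ^ finrank ℝ E * μ s := by
  rw [Measure.addHaar_image_homothety, abs_of_nonneg (by positivity),
    ENNReal.ofReal_pow (by norm_num), ENNReal.ofReal_inv_of_pos (by norm_num), ENNReal.ofReal_ofNat]

theorem Convex.inv_two_pow_mul_measure_le_measure_abs_ge {K : Set E} (hK : Convex ℝ K) {z : E}
    (hz : z ∈ K) (hz' : -z ∈ K) (f : E →L[ℝ] ℝ) :
    2⁻¹ ^ finrank ℝ E * μ K ≤ μ {x | x ∈ K ∧ f z / 2 ≤ |f x|} := by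
  set T := {x | x ∈ K ∧ f z / 2 ≤ |f x|}
  rcases le_or_gt (f z) 0 with hfz | hfz
  · have hT : T = K := Set.sep_eq_self_iff_mem_true.mpr fun x _ => by
      linarith [abs_nonneg (f x)]
    rw [hT]
    exact mul_le_of_le_one_left' (pow_le_one₀ (by simp) (ENNReal.inv_le_one.mpr one_le_two))
  set Kp := {x | x ∈ K ∧ 0 ≤ f x}
  set Km := {x | x ∈ K ∧ f x ≤ 0}
  set H := {x | f z / 2 ≤ f x}
  have hH : MeasurableSet H := measurableSet_le measurable_const f.continuous.measurable
  have hKp : homothety z (2⁻¹ : ℝ) '' Kp ⊆ T ∩ H := by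
    rintro _ ⟨x, ⟨hxK, hfx⟩, rfl⟩
    have hf := f.map_homothety_half z x
    refine ⟨⟨hK.homothety_half_mem hz hxK, ?_⟩, ?_⟩
    · rw [hf, abs_of_nonneg (by linarith)]; linarith
    · change _ ≤ f _; rw [hf]; linarith
  have hKm : homothety (-z) (2⁻¹ : ℝ) '' Km ⊆ T \ H := by
    rintro _ ⟨x, ⟨hxK, hfx⟩, rfl⟩
    have hf := f.map_homothety_half (-z) x
    rw [map_neg] at hf
    refine ⟨⟨hK.homothety_half_mem hz' hxK, ?_⟩, ?_⟩
    · rw [hf, abs_of_nonpos (by linarith)]; linarith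
    · change ¬ _ ≤ f _; rw [hf]; linarith
  have hsplit : K ⊆ Kp ∪ Km := fun x hx => (le_total 0 (f x)).imp (⟨hx, ·⟩) (⟨hx, ·⟩)
  calc 2⁻¹ ^ finrank ℝ E * μ K
      ≤ 2⁻¹ ^ finrank ℝ E * (μ Kp + μ Km) := by
        gcongr; exact (measure_mono hsplit).trans (measure_union_le Kp Km)
    _ = μ (homothety z (2⁻¹ : ℝ) '' Kp) + μ (homothety (-z) (2⁻¹ : ℝ) '' Km) := by
        rw [mul_add, addHaar_image_homothety_half, addHaar_image_homothety_half]
    _ ≤ μ (T ∩ H) + μ (T \ H) := by gcongr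
    _ = μ T := measure_inter_add_sdiff T hH

end HalfHomothety

theorem stmt3_general {n : ℕ} (K : Set (Fin n → ℝ))
    (hconv : Convex ℝ K) (hsymm : K = -K)
    (z : Fin n → ℝ) (hz : z ∈ K) (a : Fin n → ℝ) :
    (2 : ENNReal)⁻¹ ^ n * volume K ≤
      volume {x | x ∈ K ∧ (∑ i, a i * z i) / 2 ≤ |∑ i, a i * x i|} := by
  let f : (Fin n → ℝ) →L[ℝ] ℝ := ∑ i, a i • ContinuousLinearMap.proj i
  have hf (x : Fin n → ℝ) : f x = ∑ i, a i * x i := by simp [f]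
  have hz' : -z ∈ K := by rw [hsymm]; exact Set.neg_mem_neg.mpr hz
  simpa only [hf, finrank_fin_fun] using
    hconv.inv_two_pow_mul_measure_le_measure_abs_ge volume hz hz' f

/-- For a symmetric convex body `K ⊂ ℝⁿ`, `z ∈ K` and `a ∈ ℝⁿ`, the set
`{x ∈ K : |⟨a,x⟩| ≥ ⟨a,z⟩/2}` has Lebesgue measure at least `2⁻ⁿ vol(K)`. -/
theorem stmt3 {n : ℕ} (K : Set (Fin n → ℝ))
    (hconv : Convex ℝ K) (hcomp : IsCompact K) (hsymm : K = -K)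
    (hint : (interior K).Nonempty)
    (z : Fin n → ℝ) (hz : z ∈ K) (a : Fin n → ℝ) :
    (2 : ENNReal)⁻¹ ^ n * volume K ≤
      volume {x | x ∈ K ∧ (∑ i, a i * z i) / 2 ≤ |∑ i, a i * x i|} :=
  stmt3_general K hconv hsymm z hz a
end

section
/- Let u: ℝ → ℝ be twice differentiable with u'' convex and u''(0) = 0. For s ∈ ℝ define v_s(t) = (1/4)[u(s+t) + u(s−t) + u(−s+t) + u(−s−t)]. Then v_s is nondecreasing on [0, ∞). -/
/-!
With `e x = u x + u (-x)`, one has `4 v_s(t) = e (s + t) + e (s - t)`. Convexity of `u''` and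
`u''(0) = 0` give `e'' x = u'' x + u'' (-x) ≥ 2 u''(0) = 0`, so `e` is convex. Hence
`t ↦ e (s + t) + e (s - t)` is convex and even, and a convex even function is nondecreasing on
`[0, ∞)`, since `t ∈ [-t', t']` forces its value at `t` below the common value at `±t'`.
-/

open Set

lemma ConvexOn.two_mul_map_zero_le {E : Type*} [AddCommGroup E] [Module ℝ E] {f : E → ℝ}
    (hf : ConvexOn ℝ univ f) (x : E) : 2 * f 0 ≤ f x + f (-x) := by
  have h := hf.2 (mem_univ x) (mem_univ (-x)) (by norm_num : (0 : ℝ) ≤ 1 / 2)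
    (by norm_num : (0 : ℝ) ≤ 1 / 2) (by norm_num)
  rw [smul_neg, add_neg_cancel, smul_eq_mul, smul_eq_mul] at h
  linarith

lemma ConvexOn.monotoneOn_Ici_of_even {f : ℝ → ℝ} (hf : ConvexOn ℝ univ f)
    (heven : ∀ x, f (-x) = f x) : MonotoneOn f (Ici 0) := by
  intro a ha b _ hab
  have hb : -b ≤ b := by linarith [mem_Ici.mp ha]
  have hseg : a ∈ segment ℝ (-b) b := by
    rw [segment_eq_Icc hb]
    exact ⟨by linarith [mem_Ici.mp ha], hab⟩
  simpa [heven] using hf.le_on_segment (mem_univ _) (mem_univ _) hseg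

lemma ConvexOn.monotoneOn_map_add_add_map_sub {f : ℝ → ℝ} (hf : ConvexOn ℝ univ f) (s : ℝ) :
    MonotoneOn (fun t => f (s + t) + f (s - t)) (Ici 0) := by
  have hplus : ConvexOn ℝ univ (fun t => f (s + t)) := by
    simpa [Function.comp_def] using hf.translate_right s
  have hminus : ConvexOn ℝ univ (fun t => f (s - t)) := by
    simpa [Function.comp_def, neg_add_eq_sub] using
      (hf.comp_linearMap (-LinearMap.id)).translate_right (-s)
  refine (hplus.add hminus).monotoneOn_Ici_of_even fun t => ?_
  simp only [Pi.add_apply, sub_neg_eq_add, ← sub_eq_add_neg]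
  ring

lemma HasDerivAt.comp_neg {f : ℝ → ℝ} {f' x : ℝ} (hf : HasDerivAt f f' (-x)) :
    HasDerivAt (fun x => f (-x)) (-f') x := by
  simpa [Function.comp_def] using hf.comp x (hasDerivAt_neg x)

lemma hasDerivAt_add_comp_neg {f f' : ℝ → ℝ} (hf : ∀ x, HasDerivAt f (f' x) x) (x : ℝ) :
    HasDerivAt (fun x => f x + f (-x)) (f' x - f' (-x)) x := by
  simpa [sub_eq_add_neg] using (hf x).fun_add (hf (-x)).comp_neg

lemma hasDerivAt_sub_comp_neg {f f' : ℝ → ℝ} (hf : ∀ x, HasDerivAt f (f' x) x) (x : ℝ) :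
    HasDerivAt (fun x => f x - f (-x)) (f' x + f' (-x)) x := by
  simpa using (hf x).fun_sub (hf (-x)).comp_neg

lemma convexOn_univ_add_comp_neg {u u' u'' : ℝ → ℝ} (hu' : ∀ x, HasDerivAt u (u' x) x)
    (hu'' : ∀ x, HasDerivAt u' (u'' x) x) (hsymm : ∀ x, 0 ≤ u'' x + u'' (-x)) :
    ConvexOn ℝ univ (fun x => u x + u (-x)) := by
  refine convexOn_of_hasDerivWithinAt2_nonneg convex_univ (Continuous.continuousOn ?_)
    (fun x _ => (hasDerivAt_add_comp_neg hu' x).hasDerivWithinAt)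
    (fun x _ => (hasDerivAt_sub_comp_neg hu'' x).hasDerivWithinAt) fun x _ => hsymm x
  exact continuous_iff_continuousAt.2 fun x => (hasDerivAt_add_comp_neg hu' x).continuousAt

/-- If `u` is twice differentiable with `u''` convex and `u''(0) = 0`, then
`v_s(t) = (u(s+t) + u(s−t) + u(−s+t) + u(−s−t))/4` is nondecreasing on `[0,∞)`. -/
theorem stmt14 (u u' u'' : ℝ → ℝ)
    (hu' : ∀ x, HasDerivAt u (u' x) x)
    (hu'' : ∀ x, HasDerivAt u' (u'' x) x)
    (hconv : ConvexOn ℝ Set.univ u'') (h0 : u'' 0 = 0) (s : ℝ) :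
    MonotoneOn (fun t => (u (s + t) + u (s - t) + u (-s + t) + u (-s - t)) / 4)
      (Set.Ici (0 : ℝ)) := by
  have hsymm : ∀ x, 0 ≤ u'' x + u'' (-x) := by
    simpa [h0] using hconv.two_mul_map_zero_le
  have hmono := (convexOn_univ_add_comp_neg hu' hu'' hsymm).monotoneOn_map_add_add_map_sub s
  intro a ha b hb hab
  have h := hmono ha hb hab
  simp only [neg_add', neg_sub] at h
  simp only [neg_add_eq_sub]
  linarith
end
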